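/- Let J_1, …, J_s (s ≥ 1) be finsets of Fin m and let B = J_1 ∪ ⋯ ∪ J_s be their union. Then the subgroup ⋂_t stab(J_t) of Equiv.Perm (Fin m) is isomorphic as a group to H × Equiv.Perm ↥(Bᶜ), where H is the subgroup of Equiv.Perm ↥B consisting of those permutations h of ↥B such that for each t the finset {x : ↥B | ↑x ∈ J_t} is mapped onto itself by h; moreover, under this isomorphism the factor Equiv.Perm ↥(Bᶜ) corresponds to permutations of Fin m that fix every element of every J_t. (This establishes the stabiliser consistency stab(J, m) ≅ stab(J, b(J)) × Σ_{m−b(J)}, where Σ_{m−b(J)} acts trivially on J.) -/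

import Mathlib

/-!
A permutation preserving the union `B` of the `J t` is the same thing as a pair of
permutations, one of `B` and one of its complement, glued together. The glued permutation
preserves `J t ⊆ B` exactly when its `B`-component preserves `J t` viewed inside `B`, and it
fixes `B` pointwise exactly when that component is trivial. Hence gluing identifies
`stab(J, b(J)) × Perm Bᶜ` with `⋂ t, stab (J t)`.
-/

/-- The stabilizer `stab(J) = {g | J.image g = J}` of a finset `J` in the symmetric
group `Equiv.Perm α`. -/
def stab {α : Type*} [DecidableEq α] (J : Finset α) : Subgroup (Equiv.Perm α) where
  carrier := {g | J.image ⇑g = J}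
  one_mem' := by simp
  mul_mem' := by
    intro g h hg hh
    simp only [Set.mem_setOf_eq] at *
    rw [Equiv.Perm.coe_mul, ← Finset.image_image, hh, hg]
  inv_mem' := by
    intro g hg
    simp only [Set.mem_setOf_eq] at *
    conv_lhs => rw [← hg]
    rw [Finset.image_image]
    simp [Function.comp_def]

open Equiv Finset

theorem mem_stab_iff {α : Type*} [DecidableEq α] {J : Finset α} {g : Perm α} :
    g ∈ stab J ↔ ∀ x, g x ∈ J ↔ x ∈ J := by
  change J.image g = J ↔ _
  constructor
  · intro hg x
    refine ⟨fun hgx => ?_, fun hx => hg ▸ mem_image_of_mem g hx⟩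
    obtain ⟨y, hy, hyx⟩ := mem_image.1 (hg.symm ▸ hgx : g x ∈ J.image g)
    exact g.injective hyx ▸ hy
  · intro hg
    ext y
    refine ⟨?_, fun hy => mem_image.2 ⟨g⁻¹ y, (hg _).1 (by simpa using hy), by simp⟩⟩
    intro hy
    obtain ⟨x, hx, rfl⟩ := mem_image.1 hy
    exact (hg x).2 hx

theorem mem_stab_biUnion {α ι : Type*} [DecidableEq α] {s : Finset ι} {J : ι → Finset α}
    {g : Perm α} (hg : ∀ t ∈ s, g ∈ stab (J t)) : g ∈ stab (s.biUnion J) := by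
  simp only [mem_stab_iff, mem_biUnion] at hg ⊢
  intro x
  exact exists_congr fun t => and_congr_right fun ht => hg t ht x

section Gluing

variable {α : Type*} [DecidableEq α] [Fintype α] (B : Finset α)

def finsetSubtypeCongrHom : Perm B × Perm ↥Bᶜ →* Perm α :=
  (Perm.subtypeCongrHom (· ∈ B)).comp <| (MonoidHom.id _).prodMap
    (subtypeEquivRight fun _ => mem_compl).permCongrHom.toMonoidHom

variable {B}

theorem finsetSubtypeCongrHom_apply_of_mem (p : Perm B × Perm ↥Bᶜ) {x : α} (hx : x ∈ B) :
    finsetSubtypeCongrHom B p x = p.1 ⟨x, hx⟩ :=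
  Perm.subtypeCongr.left_apply _ _ hx

theorem finsetSubtypeCongrHom_apply_of_notMem (p : Perm B × Perm ↥Bᶜ) {x : α} (hx : x ∉ B) :
    finsetSubtypeCongrHom B p x = p.2 ⟨x, mem_compl.2 hx⟩ :=
  Perm.subtypeCongr.right_apply _ _ hx

theorem finsetSubtypeCongrHom_injective : Function.Injective (finsetSubtypeCongrHom B) := by
  intro p q hpq
  have hpq' := fun x => DFunLike.congr_fun hpq x
  refine Prod.ext (Equiv.ext fun x => Subtype.ext ?_) (Equiv.ext fun x => Subtype.ext ?_)
  · simpa only [finsetSubtypeCongrHom_apply_of_mem _ x.2] using hpq' x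
  · simpa only [finsetSubtypeCongrHom_apply_of_notMem _ (mem_compl.1 x.2)] using hpq' x

theorem stab_le_range_finsetSubtypeCongrHom : stab B ≤ (finsetSubtypeCongrHom B).range := by
  intro g hg
  have hgc : ∀ x, g x ∈ Bᶜ ↔ x ∈ Bᶜ := by
    simpa only [mem_compl, not_iff_not] using mem_stab_iff.1 hg
  refine ⟨(g.subtypePerm (mem_stab_iff.1 hg), g.subtypePerm hgc), Equiv.ext fun x => ?_⟩
  by_cases hx : x ∈ B
  · rw [finsetSubtypeCongrHom_apply_of_mem _ hx]; rfl
  · rw [finsetSubtypeCongrHom_apply_of_notMem _ hx]; rfl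

theorem finsetSubtypeCongrHom_mem_stab_iff {J : Finset α} (hJ : J ⊆ B)
    (p : Perm B × Perm ↥Bᶜ) :
    finsetSubtypeCongrHom B p ∈ stab J ↔
      p.1 ∈ stab (univ.filter fun x : B => ↑x ∈ J) := by
  simp only [mem_stab_iff, mem_filter, mem_univ, true_and]
  constructor
  · intro h y
    simpa only [finsetSubtypeCongrHom_apply_of_mem _ y.2] using h y
  · intro h x
    by_cases hx : x ∈ B
    · rw [finsetSubtypeCongrHom_apply_of_mem _ hx]
      exact h ⟨x, hx⟩
    · rw [finsetSubtypeCongrHom_apply_of_notMem _ hx]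
      exact iff_of_false (fun h => mem_compl.1 (p.2 _).2 (hJ h)) (fun h => hx (hJ h))

theorem fst_eq_one_iff_forall_finsetSubtypeCongrHom_apply (p : Perm B × Perm ↥Bᶜ) :
    p.1 = 1 ↔ ∀ x ∈ B, finsetSubtypeCongrHom B p x = x := by
  rw [Perm.ext_iff]
  constructor
  · intro h x hx
    rw [finsetSubtypeCongrHom_apply_of_mem _ hx, h]
    rfl
  · intro h x
    simpa only [finsetSubtypeCongrHom_apply_of_mem _ x.2, Subtype.ext_iff, Perm.coe_one,
      id_eq] using h x x.2

end Gluing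

section UnionOfFinsets

variable {α ι : Type*} [DecidableEq α] [Fintype α] [Fintype ι] (J : ι → Finset α)

/-- The paper's `stab(J, b(J))`. -/
def stabOnUnion : Subgroup (Perm ↥(univ.biUnion J)) :=
  ⨅ t, stab (univ.filter fun x : ↥(univ.biUnion J) => ↑x ∈ J t)

def stabOnUnionGlueHom : stabOnUnion J × Perm ↥(univ.biUnion J)ᶜ →* Perm α :=
  (finsetSubtypeCongrHom _).comp ((stabOnUnion J).subtype.prodMap (MonoidHom.id _))

theorem stabOnUnionGlueHom_injective : Function.Injective (stabOnUnionGlueHom J) :=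
  finsetSubtypeCongrHom_injective.comp <|
    Prod.map_injective.2 ⟨Subtype.val_injective, fun _ _ => id⟩

theorem range_stabOnUnionGlueHom : (stabOnUnionGlueHom J).range = ⨅ t, stab (J t) := by
  have hJ : ∀ t, J t ⊆ univ.biUnion J := fun t => subset_biUnion_of_mem J (mem_univ t)
  apply le_antisymm
  · rintro _ ⟨p, rfl⟩
    exact Subgroup.mem_iInf.2 fun t => (finsetSubtypeCongrHom_mem_stab_iff (hJ t) _).2
      (Subgroup.mem_iInf.1 p.1.2 t)
  · intro g hg
    have hg' := Subgroup.mem_iInf.1 hg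
    obtain ⟨p, rfl⟩ :=
      stab_le_range_finsetSubtypeCongrHom (mem_stab_biUnion (s := univ) fun t _ => hg' t)
    exact ⟨(⟨p.1, Subgroup.mem_iInf.2 fun t =>
      (finsetSubtypeCongrHom_mem_stab_iff (hJ t) p).1 (hg' t)⟩, p.2), rfl⟩

noncomputable def iInfStabEquiv :
    ↥(⨅ t, stab (J t)) ≃* stabOnUnion J × Perm ↥(univ.biUnion J)ᶜ :=
  ((MonoidHom.ofInjective (stabOnUnionGlueHom_injective J)).trans
    (MulEquiv.subgroupCongr (range_stabOnUnionGlueHom J))).symm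

theorem stabOnUnionGlueHom_iInfStabEquiv (g : ↥(⨅ t, stab (J t))) :
    stabOnUnionGlueHom J (iInfStabEquiv J g) = g :=
  congrArg Subtype.val ((iInfStabEquiv J).symm_apply_apply g)

theorem iInfStabEquiv_fst_eq_one_iff (g : ↥(⨅ t, stab (J t))) :
    (iInfStabEquiv J g).1 = 1 ↔ ∀ t, ∀ x ∈ J t, (g : Perm α) x = x := by
  rw [← OneMemClass.coe_eq_one, ← stabOnUnionGlueHom_iInfStabEquiv J g]
  refine (fst_eq_one_iff_forall_finsetSubtypeCongrHom_apply (_, (iInfStabEquiv J g).2)).trans ?_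
  simp only [mem_biUnion, mem_univ, true_and, forall_exists_index]
  exact forall_comm

end UnionOfFinsets

theorem stmt_10_general {m s : ℕ} (J : Fin s → Finset (Fin m))
    (B : Finset (Fin m)) (hB : B = Finset.univ.biUnion J)
    (H : Subgroup (Equiv.Perm {x // x ∈ B}))
    (hH : H = ⨅ t : Fin s,
      stab (Finset.univ.filter fun x : {x // x ∈ B} => (x : Fin m) ∈ J t)) :
    ∃ e : (↥(⨅ t : Fin s, stab (J t))) ≃* ↥H × Equiv.Perm {x // x ∈ Bᶜ},
      ∀ g : ↥(⨅ t : Fin s, stab (J t)),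
        ((e g).1 = 1 ↔ ∀ t : Fin s, ∀ x ∈ J t, (g : Equiv.Perm (Fin m)) x = x) := by
  subst hB hH
  exact ⟨iInfStabEquiv J, iInfStabEquiv_fst_eq_one_iff J⟩

/-- For finsets `J_1, …, J_s` of `Fin m` with union `B`, the subgroup
`⋂_t stab(J_t)` of `Equiv.Perm (Fin m)` is isomorphic to `H × Perm ↥(Bᶜ)`, where `H`
is the subgroup of `Perm ↥B` of permutations mapping each `{x : ↥B | ↑x ∈ J_t}` onto
itself; under the isomorphism, the factor `Perm ↥(Bᶜ)` corresponds to the permutations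
of `Fin m` fixing every element of every `J_t`. -/
theorem stmt_10 {m s : ℕ} (hs : 1 ≤ s) (J : Fin s → Finset (Fin m))
    (B : Finset (Fin m)) (hB : B = Finset.univ.biUnion J)
    (H : Subgroup (Equiv.Perm {x // x ∈ B}))
    (hH : H = ⨅ t : Fin s,
      stab (Finset.univ.filter fun x : {x // x ∈ B} => (x : Fin m) ∈ J t)) :
    ∃ e : (↥(⨅ t : Fin s, stab (J t))) ≃* ↥H × Equiv.Perm {x // x ∈ Bᶜ},
      ∀ g : ↥(⨅ t : Fin s, stab (J t)),
        ((e g).1 = 1 ↔ ∀ t : Fin s, ∀ x ∈ J t, (g : Equiv.Perm (Fin m)) x = x) :=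
  stmt_10_general J B hB H hH
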